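/- Differentiability of the nudged ground-state energy at β = 0 (quantum): Suppose the smallest eigenvalue λ(0) of H has a one-dimensional eigenspace, spanned by a unit eigenvector ψ₀. Then the function λ(β) = min over unit vectors ψ of re⟨ψ, (H + β • Ĉ) ψ⟩ is differentiable at β = 0 with λ′(0) = re⟨ψ₀, Ĉ ψ₀⟩. -/

import Mathlib

/-!
Let `t` be the distance of a unit vector `ψ` from the line `ℂ ψ₀`. The spectral gap `δ` of `H`
above its simple lowest eigenvalue gives `re⟪ψ, H ψ⟫ ≥ μ + δ t²`, while
`|re⟪ψ, C ψ⟫ - re⟪ψ₀, C ψ₀⟫| ≤ 3 ‖C‖ t`. Testing with `ψ₀` gives `λ(β) ≤ μ + β re⟪ψ₀, C ψ₀⟫`,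
and minimising `δ t² - 3 ‖C‖ |β| t` over `t` gives the same bound from below up to
`9 ‖C‖² β² / (4 δ)`. An error that is quadratic in `β` forces the derivative.
-/

open scoped InnerProductSpace
open Filter Asymptotics

theorem hasDerivAt_of_abs_sub_le_mul_sq {f : ℝ → ℝ} {x₀ a f' K : ℝ}
    (h : ∀ x, |f x - (a + (x - x₀) * f')| ≤ K * (x - x₀) ^ 2) : HasDerivAt f f' x₀ := by
  have ha : f x₀ = a := by simpa [sub_eq_zero] using h x₀
  rw [hasDerivAt_iff_isLittleO]
  refine IsBigO.trans_isLittleO ?_ (isLittleO_pow_sub_sub x₀ one_lt_two)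
  refine IsBigO.of_bound K (Eventually.of_forall fun x => ?_)
  simpa [ha, Real.norm_eq_abs, sq_abs, sub_sub] using h x

theorem Finite.exists_pos_forall_le {ι : Type*} [Finite ι] {g : ι → ℝ} (hg : ∀ i, 0 < g i) :
    ∃ δ > 0, ∀ i, δ ≤ g i := by
  have : ∀ᶠ δ in nhdsWithin (0 : ℝ) (Set.Ioi 0), ∀ i, δ ≤ g i :=
    eventually_all.2 fun i => nhdsWithin_le_nhds (eventually_le_nhds (hg i))
  exact (this.and self_mem_nhdsWithin).exists.imp fun δ h => ⟨h.2, h.1⟩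

section

variable {E : Type*} [NormedAddCommGroup E] [InnerProductSpace ℂ E]

theorem OrthonormalBasis.re_inner_apply_self_eq_sum {ι : Type*} [Fintype ι]
    (b : OrthonormalBasis ι ℂ E) {T : E →ₗ[ℂ] E} {ν : ι → ℝ}
    (hb : ∀ i, T (b i) = (ν i : ℂ) • b i) (ψ : E) :
    (⟪ψ, T ψ⟫_ℂ).re = ∑ i, ν i * ‖⟪b i, ψ⟫_ℂ‖ ^ 2 := by
  have hT : T ψ = ∑ i, (ν i * ⟪b i, ψ⟫_ℂ) • b i := by
    conv_lhs => rw [← b.sum_repr' ψ]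
    simp only [map_sum, map_smul, hb, smul_smul, mul_comm]
  rw [hT, inner_sum, Complex.re_sum]
  refine Finset.sum_congr rfl fun i _ => ?_
  rw [inner_smul_right, ← inner_conj_symm ψ (b i), mul_assoc, Complex.mul_conj',
    ← Complex.ofReal_pow, Complex.re_ofReal_mul, Complex.ofReal_re]

theorem norm_sub_inner_smul_sq {ψ₀ : E} (hψ₀ : ‖ψ₀‖ = 1) (ψ : E) :
    ‖ψ - ⟪ψ₀, ψ⟫_ℂ • ψ₀‖ ^ 2 = ‖ψ‖ ^ 2 - ‖⟪ψ₀, ψ⟫_ℂ‖ ^ 2 := by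
  rw [@norm_sub_sq ℂ, inner_smul_right, norm_smul, hψ₀, ← inner_conj_symm ψ ψ₀,
    Complex.mul_conj', ← Complex.ofReal_pow, RCLike.re_to_complex, Complex.ofReal_re]
  ring

theorem re_inner_add_smul_apply (H C : E →L[ℂ] E) (β : ℝ) (ψ : E) :
    (⟪ψ, (H + (β : ℂ) • C) ψ⟫_ℂ).re = (⟪ψ, H ψ⟫_ℂ).re + β * (⟪ψ, C ψ⟫_ℂ).re := by
  simp

theorem abs_re_inner_apply_sub_le (T : E →L[ℂ] E) (x y : E) :
    |(⟪x, T x⟫_ℂ).re - (⟪y, T y⟫_ℂ).re| ≤ ‖T‖ * ‖x - y‖ * (‖x‖ + ‖y‖) := by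
  have h : ⟪x, T x⟫_ℂ - ⟪y, T y⟫_ℂ = ⟪x - y, T x⟫_ℂ + ⟪y, T (x - y)⟫_ℂ := by
    simp only [inner_sub_left, inner_sub_right, map_sub]; ring
  calc |(⟪x, T x⟫_ℂ).re - (⟪y, T y⟫_ℂ).re| ≤ ‖⟪x - y, T x⟫_ℂ + ⟪y, T (x - y)⟫_ℂ‖ := by
        rw [← Complex.sub_re, h]; exact Complex.abs_re_le_norm _
    _ ≤ ‖x - y‖ * (‖T‖ * ‖x‖) + ‖y‖ * (‖T‖ * ‖x - y‖) := by
        refine (norm_add_le _ _).trans (add_le_add ?_ ?_) <;>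
          exact (norm_inner_le_norm _ _).trans (by gcongr; exact T.le_opNorm _)
    _ = ‖T‖ * ‖x - y‖ * (‖x‖ + ‖y‖) := by ring

theorem abs_re_inner_apply_self_le (T : E →L[ℂ] E) (x : E) :
    |(⟪x, T x⟫_ℂ).re| ≤ ‖T‖ * ‖x‖ ^ 2 := by
  simpa [sq, mul_assoc] using abs_re_inner_apply_sub_le T x 0

theorem abs_re_inner_apply_sub_le_of_norm_eq_one (T : E →L[ℂ] E) {ψ₀ ψ : E} (hψ₀ : ‖ψ₀‖ = 1)
    (hψ : ‖ψ‖ = 1) :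
    |(⟪ψ, T ψ⟫_ℂ).re - (⟪ψ₀, T ψ₀⟫_ℂ).re| ≤ 3 * ‖T‖ * ‖ψ - ⟪ψ₀, ψ⟫_ℂ • ψ₀‖ := by
  set a := ⟪ψ₀, ψ⟫_ℂ
  set t := ‖ψ - a • ψ₀‖
  have ht0 : 0 ≤ t := norm_nonneg _
  have ht : t ^ 2 = 1 - ‖a‖ ^ 2 := by rw [norm_sub_inner_smul_sq hψ₀, hψ, one_pow]
  have ha : ‖a‖ ≤ 1 := by simpa [hψ₀, hψ] using norm_inner_le_norm (𝕜 := ℂ) ψ₀ ψ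
  have ht1 : t ≤ 1 := by nlinarith [norm_nonneg a]
  have hnear : |(⟪ψ, T ψ⟫_ℂ).re - (⟪a • ψ₀, T (a • ψ₀)⟫_ℂ).re| ≤ ‖T‖ * t * (1 + ‖a‖) := by
    simpa [hψ, norm_smul, hψ₀] using abs_re_inner_apply_sub_le T ψ (a • ψ₀)
  have hscale : (⟪a • ψ₀, T (a • ψ₀)⟫_ℂ).re = ‖a‖ ^ 2 * (⟪ψ₀, T ψ₀⟫_ℂ).re := by
    rw [map_smul, inner_smul_left, inner_smul_right, ← mul_assoc, Complex.conj_mul',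
      ← Complex.ofReal_pow, Complex.re_ofReal_mul]
  have hc : |(⟪ψ₀, T ψ₀⟫_ℂ).re| ≤ ‖T‖ := by simpa [hψ₀] using abs_re_inner_apply_self_le T ψ₀
  have hfar : |(⟪a • ψ₀, T (a • ψ₀)⟫_ℂ).re - (⟪ψ₀, T ψ₀⟫_ℂ).re| ≤ ‖T‖ * t := by
    rw [hscale, ← sub_one_mul, abs_mul, abs_sub_comm, ← ht, abs_of_nonneg (sq_nonneg t)]
    have := mul_le_mul ht1 hc (abs_nonneg _) zero_le_one
    nlinarith [mul_le_mul_of_nonneg_left this ht0]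
  calc _ ≤ ‖T‖ * t * (1 + ‖a‖) + ‖T‖ * t := (abs_sub_le _ _ _).trans (add_le_add hnear hfar)
    _ ≤ 3 * ‖T‖ * t := by nlinarith [mul_nonneg (mul_nonneg (norm_nonneg T) ht0) (sub_nonneg.2 ha)]

theorem norm_inner_eq_of_eq_smul {ψ₀ v : E} (hψ₀ : ‖ψ₀‖ = 1) {c : ℂ} (hv : v = c • ψ₀) (ψ : E) :
    ‖⟪v, ψ⟫_ℂ‖ = ‖⟪v, ψ₀⟫_ℂ‖ * ‖⟪ψ₀, ψ⟫_ℂ‖ := by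
  simp [hv, inner_self_eq_norm_sq_to_K, hψ₀, mul_comm]

theorem LinearMap.IsSymmetric.exists_spectral_gap [FiniteDimensional ℂ E] {T : E →ₗ[ℂ] E}
    (hT : T.IsSymmetric) {ψ₀ : E} {μ : ℝ} (hψ₀ : ‖ψ₀‖ = 1)
    (hmin : ∀ (ν : ℝ) (v : E), v ≠ 0 → T v = (ν : ℂ) • v → μ ≤ ν)
    (hsimple : ∀ v : E, T v = (μ : ℂ) • v → ∃ c : ℂ, v = c • ψ₀) :
    ∃ δ > 0, ∀ ψ, δ * (‖ψ‖ ^ 2 - ‖⟪ψ₀, ψ⟫_ℂ‖ ^ 2) ≤ (⟪ψ, T ψ⟫_ℂ).re - μ * ‖ψ‖ ^ 2 := by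
  set b := hT.eigenvectorBasis rfl
  set ν := hT.eigenvalues rfl
  have hb : ∀ i, T (b i) = (ν i : ℂ) • b i := hT.apply_eigenvectorBasis rfl
  have hμ : ∀ i, μ ≤ ν i := fun i => hmin _ _ (b.orthonormal.ne_zero i) (hb i)
  obtain ⟨δ, hδ, hδν⟩ := Finite.exists_pos_forall_le (g := fun i => if ν i = μ then 1 else ν i - μ)
    fun i => by split_ifs with h; exacts [one_pos, sub_pos.2 ((hμ i).lt_of_ne' h)]
  refine ⟨δ, hδ, fun ψ => ?_⟩
  have hterm : ∀ i, δ * (‖⟪b i, ψ⟫_ℂ‖ ^ 2 - ‖⟪b i, ψ₀⟫_ℂ‖ ^ 2 * ‖⟪ψ₀, ψ⟫_ℂ‖ ^ 2)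
      ≤ (ν i - μ) * ‖⟪b i, ψ⟫_ℂ‖ ^ 2 := by
    intro i
    by_cases hi : ν i = μ
    · obtain ⟨c, hc⟩ := hsimple (b i) (hi ▸ hb i)
      rw [norm_inner_eq_of_eq_smul hψ₀ hc, hi, mul_pow, sub_self, sub_self, mul_zero, zero_mul]
    · have := hδν i
      simp only [hi, if_false] at this
      nlinarith [mul_le_mul_of_nonneg_right this (sq_nonneg ‖⟪b i, ψ⟫_ℂ‖),
        mul_nonneg hδ.le (mul_nonneg (sq_nonneg ‖⟪b i, ψ₀⟫_ℂ‖) (sq_nonneg ‖⟪ψ₀, ψ⟫_ℂ‖))]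
  calc δ * (‖ψ‖ ^ 2 - ‖⟪ψ₀, ψ⟫_ℂ‖ ^ 2)
      = ∑ i, δ * (‖⟪b i, ψ⟫_ℂ‖ ^ 2 - ‖⟪b i, ψ₀⟫_ℂ‖ ^ 2 * ‖⟪ψ₀, ψ⟫_ℂ‖ ^ 2) := by
        rw [← Finset.mul_sum, Finset.sum_sub_distrib, ← Finset.sum_mul,
          b.sum_sq_norm_inner_right, b.sum_sq_norm_inner_right, hψ₀, one_pow, one_mul]
    _ ≤ ∑ i, (ν i - μ) * ‖⟪b i, ψ⟫_ℂ‖ ^ 2 := Finset.sum_le_sum fun i _ => hterm i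
    _ = (⟪ψ, T ψ⟫_ℂ).re - μ * ‖ψ‖ ^ 2 := by
        simp only [sub_mul, Finset.sum_sub_distrib, ← Finset.mul_sum,
          b.re_inner_apply_self_eq_sum hb, b.sum_sq_norm_inner_right]

noncomputable def groundEnergy (T : E →L[ℂ] E) : ℝ :=
  ⨅ φ : Metric.sphere (0 : E) 1, (⟪(φ : E), T φ⟫_ℂ).re

theorem groundEnergy_le (T : E →L[ℂ] E) {ψ : E} (hψ : ‖ψ‖ = 1) :
    groundEnergy T ≤ (⟪ψ, T ψ⟫_ℂ).re := by
  refine ciInf_le ⟨-‖T‖, ?_⟩ (⟨ψ, by simpa using hψ⟩ : Metric.sphere (0 : E) 1)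
  rintro _ ⟨φ, rfl⟩
  have := abs_re_inner_apply_self_le T φ
  rw [mem_sphere_zero_iff_norm.1 φ.2, one_pow, mul_one] at this
  exact neg_le_of_abs_le this

theorem exists_groundEnergy_eq [FiniteDimensional ℂ E] [Nontrivial E] (T : E →L[ℂ] E) :
    ∃ ψ : E, ‖ψ‖ = 1 ∧ groundEnergy T = (⟪ψ, T ψ⟫_ℂ).re := by
  obtain ⟨ψ, hψ, hmin⟩ := (isCompact_sphere (0 : E) 1).exists_isMinOn
    (NormedSpace.sphere_nonempty.2 zero_le_one)
    (Complex.continuous_re.comp (continuous_id.inner T.continuous)).continuousOn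
  have hψ1 : ‖ψ‖ = 1 := mem_sphere_zero_iff_norm.1 hψ
  have : Nonempty (Metric.sphere (0 : E) 1) := ⟨⟨ψ, hψ⟩⟩
  exact ⟨ψ, hψ1, (groundEnergy_le T hψ1).antisymm (le_ciInf fun φ => hmin φ.2)⟩

theorem groundEnergy_add_smul_le {H : E →L[ℂ] E} (C : E →L[ℂ] E) {ψ₀ : E} {μ : ℝ}
    (hψ₀ : ‖ψ₀‖ = 1) (heig : H ψ₀ = (μ : ℂ) • ψ₀) (β : ℝ) :
    groundEnergy (H + (β : ℂ) • C) ≤ μ + β * (⟪ψ₀, C ψ₀⟫_ℂ).re := by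
  refine (groundEnergy_le _ hψ₀).trans_eq ?_
  simp [heig, inner_self_eq_norm_sq_to_K, hψ₀]

theorem le_groundEnergy_add_smul [FiniteDimensional ℂ E] [Nontrivial E] {H : E →L[ℂ] E}
    (C : E →L[ℂ] E) {ψ₀ : E} {μ δ : ℝ} (hψ₀ : ‖ψ₀‖ = 1) (hδ : 0 < δ)
    (hgap : ∀ ψ, δ * (‖ψ‖ ^ 2 - ‖⟪ψ₀, ψ⟫_ℂ‖ ^ 2) ≤ (⟪ψ, H ψ⟫_ℂ).re - μ * ‖ψ‖ ^ 2) (β : ℝ) :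
    μ + β * (⟪ψ₀, C ψ₀⟫_ℂ).re - (3 * ‖C‖) ^ 2 / (4 * δ) * β ^ 2
      ≤ groundEnergy (H + (β : ℂ) • C) := by
  obtain ⟨ψ, hψ, hE⟩ := exists_groundEnergy_eq (H + (β : ℂ) • C)
  rw [hE, re_inner_add_smul_apply]
  set t := ‖ψ - ⟪ψ₀, ψ⟫_ℂ • ψ₀‖
  have hH : μ + δ * t ^ 2 ≤ (⟪ψ, H ψ⟫_ℂ).re := by
    have := hgap ψ
    rw [← norm_sub_inner_smul_sq hψ₀, hψ] at this
    linarith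
  have hC : -(|β| * (3 * ‖C‖ * t)) ≤ β * ((⟪ψ, C ψ⟫_ℂ).re - (⟪ψ₀, C ψ₀⟫_ℂ).re) := by
    refine neg_le_of_abs_le ?_
    rw [abs_mul]
    exact mul_le_mul_of_nonneg_left (abs_re_inner_apply_sub_le_of_norm_eq_one C hψ₀ hψ)
      (abs_nonneg β)
  have hamgm : |β| * (3 * ‖C‖ * t) - δ * t ^ 2 ≤ (3 * ‖C‖) ^ 2 / (4 * δ) * β ^ 2 := by
    rw [div_mul_eq_mul_div, le_div_iff₀ (by positivity)]
    nlinarith [sq_nonneg (3 * ‖C‖ * |β| - 2 * δ * t), sq_abs β]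
  linarith

end

theorem nudged_ground_state_energy_hasDerivAt_zero_general
    {E : Type*} [NormedAddCommGroup E] [InnerProductSpace ℂ E] [FiniteDimensional ℂ E]
    [Nontrivial E]
    (H C : E →L[ℂ] E) (hH : IsSelfAdjoint H)
    (ψ₀ : E) (μ : ℝ) (hψ₀ : ‖ψ₀‖ = 1)
    (heig : H ψ₀ = (μ : ℂ) • ψ₀)
    (hmin : ∀ (ν : ℝ) (v : E), v ≠ 0 → H v = (ν : ℂ) • v → μ ≤ ν)
    (hsimple : ∀ v : E, H v = (μ : ℂ) • v → ∃ c : ℂ, v = c • ψ₀) :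
    HasDerivAt
      (fun β : ℝ =>
        ⨅ φ : Metric.sphere (0 : E) 1, (inner ℂ (φ : E) ((H + (β : ℂ) • C) (φ : E)) : ℂ).re)
      ((inner ℂ ψ₀ (C ψ₀) : ℂ).re) 0 := by
  obtain ⟨δ, hδ, hgap⟩ := hH.isSymmetric.exists_spectral_gap hψ₀ hmin hsimple
  change HasDerivAt (fun β : ℝ => groundEnergy (H + (β : ℂ) • C)) _ 0
  refine hasDerivAt_of_abs_sub_le_mul_sq (a := μ) (K := (3 * ‖C‖) ^ 2 / (4 * δ)) fun β => ?_
  have hup := groundEnergy_add_smul_le C hψ₀ heig β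
  have hlow := le_groundEnergy_add_smul C hψ₀ hδ hgap β
  have hK : 0 ≤ (3 * ‖C‖) ^ 2 / (4 * δ) * β ^ 2 := by positivity
  rw [sub_zero, abs_le]
  constructor <;> linarith

/-- **Differentiability of the nudged ground-state energy at `β = 0` (quantum).**
Suppose the smallest eigenvalue `μ` of the self-adjoint operator `H` has a one-dimensional
eigenspace spanned by the unit eigenvector `ψ₀`.  Then
`lam β = min_{‖ψ‖=1} re⟨ψ, (H + β Ĉ) ψ⟩` is differentiable at `β = 0` with derivative
`re⟨ψ₀, Ĉ ψ₀⟩`. -/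
theorem nudged_ground_state_energy_hasDerivAt_zero
    {E : Type*} [NormedAddCommGroup E] [InnerProductSpace ℂ E] [FiniteDimensional ℂ E]
    [Nontrivial E]
    (H C : E →L[ℂ] E) (hH : IsSelfAdjoint H) (hC : IsSelfAdjoint C)
    (ψ₀ : E) (μ : ℝ) (hψ₀ : ‖ψ₀‖ = 1)
    (heig : H ψ₀ = (μ : ℂ) • ψ₀)
    (hmin : ∀ (ν : ℝ) (v : E), v ≠ 0 → H v = (ν : ℂ) • v → μ ≤ ν)
    (hsimple : ∀ v : E, H v = (μ : ℂ) • v → ∃ c : ℂ, v = c • ψ₀) :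
    HasDerivAt
      (fun β : ℝ =>
        ⨅ φ : Metric.sphere (0 : E) 1, (inner ℂ (φ : E) ((H + (β : ℂ) • C) (φ : E)) : ℂ).re)
      ((inner ℂ ψ₀ (C ψ₀) : ℂ).re) 0 :=
  nudged_ground_state_energy_hasDerivAt_zero_general H C hH ψ₀ μ hψ₀ heig hmin hsimple
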